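/- An argument A belongs to the grounded extension of a finite argumentation framework if and only if there exists a strongly admissible labelling that labels A in. -/

import Mathlib

inductive Label where
  | inn | out | und
deriving DecidableEq

/-- A labelling is admissible if every in-labelled argument has all its attackers
labelled out, and every out-labelled argument has at least one in-labelled attacker. -/
def Admissible {Ar : Type*} (att : Ar → Ar → Prop) (L : Ar → Label) : Prop :=
  (∀ x, L x = Label.inn → ∀ y, att y x → L y = Label.out) ∧
  (∀ x, L x = Label.out → ∃ y, att y x ∧ L y = Label.inn)

/-- A min-max numbering (with only natural-number values): in-arguments are numbered
1 + max of the numbers of their out-labelled attackers (max ∅ = 0), and out-arguments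
1 + min of the numbers of their in-labelled attackers. -/
def IsMinMax {Ar : Type*} (att : Ar → Ar → Prop) (L : Ar → Label) (MM : Ar → ℕ) : Prop :=
  (∀ x, L x = Label.inn → MM x = sSup (MM '' {y | att y x ∧ L y = Label.out}) + 1) ∧
  (∀ x, L x = Label.out → MM x = sInf (MM '' {y | att y x ∧ L y = Label.inn}) + 1)

/-- Strongly admissible: admissible and admitting a min-max numbering with only
natural-number (finite) values. -/
def StronglyAdmissible {Ar : Type*} (att : Ar → Ar → Prop) (L : Ar → Label) : Prop :=
  Admissible att L ∧ ∃ MM : Ar → ℕ, IsMinMax att L MM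

/-- Complete labelling: admissible, and every undec argument has an undec attacker
and no in-labelled attacker. -/
def CompleteLab {Ar : Type*} (att : Ar → Ar → Prop) (L : Ar → Label) : Prop :=
  Admissible att L ∧
  ∀ x, L x = Label.und →
    (∃ y, att y x ∧ L y = Label.und) ∧ ∀ y, att y x → L y ≠ Label.inn

/-- The order on labellings: Lab1 ⊑ Lab2 iff in(Lab1) ⊆ in(Lab2) and out(Lab1) ⊆ out(Lab2). -/
def LabLe {Ar : Type*} (L1 L2 : Ar → Label) : Prop :=
  (∀ x, L1 x = Label.inn → L2 x = Label.inn) ∧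
  (∀ x, L1 x = Label.out → L2 x = Label.out)

/-!
The grounded extension is the union of the stages `Fⁿ(∅)` of the defense operator `F`. Labelling
it in, the arguments it attacks out, and the rest undec gives a complete labelling; numbering an
argument first defended at stage `n + 1` by `2n + 1` and an argument first attacked from stage
`n + 1` by `2n + 2` is a min-max numbering, because an argument entering at stage `n + 1` has an
attacker that is first attacked from stage `n`. Conversely, induction on a min-max numbering shows
that a strongly admissible labelling lies below every complete labelling.
-/

theorem Nat.sInf_succ_lt_iff {p : ℕ → Prop} (hp : Monotone p) (h0 : ¬p 0) (hne : ∃ n, p n)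
    {n : ℕ} : sInf {m | p (m + 1)} < n ↔ p n := by
  obtain ⟨k, hk⟩ := hne
  obtain ⟨k, rfl⟩ := Nat.exists_eq_succ_of_ne_zero (ne_of_apply_ne p (fun h => h0 (h ▸ hk)))
  constructor
  · intro hlt
    exact hp (Nat.succ_le_of_lt hlt) (Nat.sInf_mem (s := {m | p (m + 1)}) ⟨k, hk⟩)
  · intro hn
    obtain ⟨n, rfl⟩ := Nat.exists_eq_succ_of_ne_zero (ne_of_apply_ne p (fun h => h0 (h ▸ hn)))
    exact Nat.lt_succ_of_le (Nat.sInf_le hn)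

section Grounded

variable {Ar : Type*} (att : Ar → Ar → Prop)

def defense (S : Set Ar) : Set Ar :=
  {x | ∀ y, att y x → ∃ z ∈ S, att z y}

theorem defense_mono : Monotone (defense att) := fun _ _ hST _ hx y hyx =>
  let ⟨z, hz, hzy⟩ := hx y hyx
  ⟨z, hST hz, hzy⟩

def defenseStage (n : ℕ) : Set Ar := (defense att)^[n] ∅

theorem defenseStage_succ (n : ℕ) :
    defenseStage att (n + 1) = defense att (defenseStage att n) :=
  Function.iterate_succ_apply' _ _ _

theorem defenseStage_mono : Monotone (defenseStage att) :=
  (defense_mono att).monotone_iterate_of_le_map (Set.empty_subset _)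

def grounded : Set Ar := ⋃ n, defenseStage att n

theorem defenseStage_subset_grounded (n : ℕ) : defenseStage att n ⊆ grounded att :=
  Set.subset_iUnion (defenseStage att) n

variable {att}

theorem not_attacks_of_mem_grounded {x y : Ar} (hx : x ∈ grounded att) (hy : y ∈ grounded att) :
    ¬att y x := by
  obtain ⟨n, hxn⟩ := Set.mem_iUnion.1 hx
  induction n generalizing x y with
  | zero => exact hxn.elim
  | succ k ih =>
    intro hyx
    obtain ⟨z, hz, hzy⟩ := (defenseStage_succ att k ▸ hxn) y hyx
    obtain ⟨m, hym⟩ := Set.mem_iUnion.1 hy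
    cases m with
    | zero => exact hym
    | succ j =>
      obtain ⟨w, hw, hwz⟩ := (defenseStage_succ att j ▸ hym) z hzy
      exact ih (defenseStage_subset_grounded att k hz)
        (defenseStage_subset_grounded att j hw) hz hwz

variable (att)

noncomputable def groundedRank (x : Ar) : ℕ :=
  sInf {n | x ∈ defenseStage att (n + 1)}

noncomputable def attackRank (y : Ar) : ℕ :=
  sInf {n | ∃ z ∈ defenseStage att (n + 1), att z y}

variable {att}

theorem groundedRank_lt_iff {x : Ar} (hx : x ∈ grounded att) {n : ℕ} :
    groundedRank att x < n ↔ x ∈ defenseStage att n :=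
  Nat.sInf_succ_lt_iff (fun _ _ h hx => defenseStage_mono att h hx) id (Set.mem_iUnion.1 hx)

theorem attackRank_lt_iff {y : Ar} (hy : ∃ z ∈ grounded att, att z y) {n : ℕ} :
    attackRank att y < n ↔ ∃ z ∈ defenseStage att n, att z y := by
  refine Nat.sInf_succ_lt_iff (p := fun n => ∃ z ∈ defenseStage att n, att z y)
    (fun _ _ h ⟨z, hz, hzy⟩ => ⟨z, defenseStage_mono att h hz, hzy⟩) (fun ⟨_, hz, _⟩ => hz) ?_
  obtain ⟨z, hz, hzy⟩ := hy
  obtain ⟨n, hzn⟩ := Set.mem_iUnion.1 hz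
  exact ⟨n, z, hzn, hzy⟩

theorem mem_defense_defenseStage_groundedRank {x : Ar} (hx : x ∈ grounded att) :
    x ∈ defense att (defenseStage att (groundedRank att x)) :=
  defenseStage_succ att _ ▸ (groundedRank_lt_iff hx).1 (Nat.lt_succ_self _)

theorem defense_grounded_subset [Finite Ar] : defense att (grounded att) ⊆ grounded att := by
  obtain ⟨N, hN⟩ := Finite.bddAbove_range (groundedRank att)
  have hG : grounded att ⊆ defenseStage att (N + 1) := fun x hx =>
    (groundedRank_lt_iff hx).1 (Nat.lt_succ_of_le (hN ⟨x, rfl⟩))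
  intro x hx
  exact defenseStage_subset_grounded att (N + 2)
    (defenseStage_succ att (N + 1) ▸ defense_mono att hG hx)

variable (att)

open Classical in
noncomputable def groundedLabelling (x : Ar) : Label :=
  if x ∈ grounded att then Label.inn
  else if ∃ z ∈ grounded att, att z x then Label.out else Label.und

open Classical in
/-- Only the values on in- and out-labelled arguments matter. -/
noncomputable def groundedNumbering (x : Ar) : ℕ :=
  if x ∈ grounded att then 2 * groundedRank att x + 1 else 2 * attackRank att x + 2

variable {att}

theorem groundedLabelling_eq_inn {x : Ar} :
    groundedLabelling att x = Label.inn ↔ x ∈ grounded att := by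
  unfold groundedLabelling; split_ifs <;> simp_all

theorem groundedLabelling_eq_out {x : Ar} :
    groundedLabelling att x = Label.out ↔ x ∉ grounded att ∧ ∃ z ∈ grounded att, att z x := by
  unfold groundedLabelling; split_ifs <;> simp_all

theorem groundedLabelling_eq_und {x : Ar} :
    groundedLabelling att x = Label.und ↔ x ∉ grounded att ∧ ¬∃ z ∈ grounded att, att z x := by
  unfold groundedLabelling; split_ifs <;> simp_all

variable (att)

theorem groundedLabelling_admissible : Admissible att (groundedLabelling att) := by
  refine ⟨fun x hx y hyx => ?_, fun x hx => ?_⟩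
  · have hxG := groundedLabelling_eq_inn.1 hx
    obtain ⟨z, hz, hzy⟩ := mem_defense_defenseStage_groundedRank hxG y hyx
    exact groundedLabelling_eq_out.2 ⟨fun hyG => not_attacks_of_mem_grounded hxG hyG hyx,
      z, defenseStage_subset_grounded att _ hz, hzy⟩
  · obtain ⟨-, z, hz, hzx⟩ := groundedLabelling_eq_out.1 hx
    exact ⟨z, hzx, groundedLabelling_eq_inn.2 hz⟩

theorem groundedLabelling_complete [Finite Ar] : CompleteLab att (groundedLabelling att) := by
  refine ⟨groundedLabelling_admissible att, fun x hx => ?_⟩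
  obtain ⟨hxG, hx⟩ := groundedLabelling_eq_und.1 hx
  refine ⟨?_, fun y hyx hy => hx ⟨y, groundedLabelling_eq_inn.1 hy, hyx⟩⟩
  have hxF : x ∉ defense att (grounded att) := fun h => hxG (defense_grounded_subset h)
  simp only [defense, Set.mem_ofPred_eq, not_forall, not_exists, not_and, exists_prop] at hxF
  obtain ⟨y, hyx, hy⟩ := hxF
  exact ⟨y, hyx, groundedLabelling_eq_und.2 ⟨fun hyG => hx ⟨y, hyG, hyx⟩, fun ⟨z, hz, hzy⟩ =>
    hy z hz hzy⟩⟩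

variable {att}

theorem groundedNumbering_of_mem {x : Ar} (hx : x ∈ grounded att) :
    groundedNumbering att x = 2 * groundedRank att x + 1 := by
  simp [groundedNumbering, hx]

theorem groundedNumbering_of_not_mem {x : Ar} (hx : x ∉ grounded att) :
    groundedNumbering att x = 2 * attackRank att x + 2 := by
  simp [groundedNumbering, hx]

/-- An argument entering at stage `n + 1` is attacked only by arguments attacked from stage `n`,
and, unless `n = 0`, by one that is not attacked from stage `n - 1`. -/
theorem sSup_groundedNumbering_outAttackers {x : Ar} (hx : x ∈ grounded att) :
    sSup (groundedNumbering att '' {y | att y x ∧ groundedLabelling att y = Label.out}) =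
      2 * groundedRank att x := by
  have hlt : ∀ y, att y x → attackRank att y < groundedRank att x := fun y hyx =>
    let ⟨z, hz, hzy⟩ := mem_defense_defenseStage_groundedRank hx y hyx
    (attackRank_lt_iff ⟨z, defenseStage_subset_grounded att _ hz, hzy⟩).2 ⟨z, hz, hzy⟩
  have hub : 2 * groundedRank att x ∈
      upperBounds (groundedNumbering att '' {y | att y x ∧ groundedLabelling att y = Label.out}) := by
    rintro _ ⟨y, ⟨hyx, hy⟩, rfl⟩
    rw [groundedNumbering_of_not_mem (groundedLabelling_eq_out.1 hy).1]
    have := hlt y hyx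
    omega
  refine le_antisymm (csSup_le' hub) ?_
  cases hn : groundedRank att x with
  | zero => exact Nat.zero_le _
  | succ k =>
    have hxk : x ∉ defense att (defenseStage att k) := by
      rw [← defenseStage_succ, ← groundedRank_lt_iff hx, hn]
      exact lt_irrefl _
    simp only [defense, Set.mem_ofPred_eq, not_forall, not_exists, not_and, exists_prop] at hxk
    obtain ⟨y, hyx, hy⟩ := hxk
    have hyout := (groundedLabelling_admissible att).1 x (groundedLabelling_eq_inn.2 hx) y hyx
    have hyk : attackRank att y = k := le_antisymm (Nat.lt_succ_iff.1 ((hlt y hyx).trans_eq hn))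
      (not_lt.1 fun h =>
        let ⟨z, hz, hzy⟩ := (attackRank_lt_iff (groundedLabelling_eq_out.1 hyout).2).1 h
        hy z hz hzy)
    refine le_csSup ⟨_, hub⟩ ⟨y, ⟨hyx, hyout⟩, ?_⟩
    rw [groundedNumbering_of_not_mem (groundedLabelling_eq_out.1 hyout).1, hyk]
    ring

theorem sInf_groundedNumbering_inAttackers {y : Ar} (hy : ∃ z ∈ grounded att, att z y) :
    sInf (groundedNumbering att '' {z | att z y ∧ groundedLabelling att z = Label.inn}) =
      2 * attackRank att y + 1 := by
  obtain ⟨z, hz, hzy⟩ := (attackRank_lt_iff hy).1 (Nat.lt_succ_self _)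
  have hzG := defenseStage_subset_grounded att _ hz
  have hle : ∀ z ∈ grounded att, att z y → attackRank att y ≤ groundedRank att z :=
    fun z hzG hzy => Nat.lt_succ_iff.1 <| (attackRank_lt_iff hy).2
      ⟨z, (groundedRank_lt_iff hzG).1 (Nat.lt_succ_self _), hzy⟩
  have hz_eq : groundedRank att z = attackRank att y :=
    le_antisymm (Nat.lt_succ_iff.1 ((groundedRank_lt_iff hzG).2 hz)) (hle z hzG hzy)
  refine IsLeast.csInf_eq ⟨⟨z, ⟨hzy, groundedLabelling_eq_inn.2 hzG⟩, ?_⟩, ?_⟩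
  · rw [groundedNumbering_of_mem hzG, hz_eq]
  · rintro _ ⟨w, ⟨hwy, hw⟩, rfl⟩
    have hwG := groundedLabelling_eq_inn.1 hw
    rw [groundedNumbering_of_mem hwG]
    have := hle w hwG hwy
    omega

variable (att)

theorem groundedNumbering_isMinMax :
    IsMinMax att (groundedLabelling att) (groundedNumbering att) := by
  refine ⟨fun x hx => ?_, fun y hy => ?_⟩
  · have hxG := groundedLabelling_eq_inn.1 hx
    rw [sSup_groundedNumbering_outAttackers hxG, groundedNumbering_of_mem hxG]
  · obtain ⟨hyG, hattacked⟩ := groundedLabelling_eq_out.1 hy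
    rw [sInf_groundedNumbering_inAttackers hattacked, groundedNumbering_of_not_mem hyG]

theorem groundedLabelling_stronglyAdmissible : StronglyAdmissible att (groundedLabelling att) :=
  ⟨groundedLabelling_admissible att, groundedNumbering att, groundedNumbering_isMinMax att⟩

end Grounded

section Complete

variable {Ar : Type*} {att : Ar → Ar → Prop} {C : Ar → Label}

theorem CompleteLab.eq_inn_of_forall_attacker_out (hC : CompleteLab att C) {x : Ar}
    (h : ∀ y, att y x → C y = Label.out) : C x = Label.inn := by
  cases hx : C x with
  | inn => rfl
  | out =>
    obtain ⟨y, hyx, hy⟩ := hC.1.2 x hx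
    simp [h y hyx] at hy
  | und =>
    obtain ⟨⟨y, hyx, hy⟩, -⟩ := hC.2 x hx
    simp [h y hyx] at hy

theorem CompleteLab.eq_out_of_attacker_inn (hC : CompleteLab att C) {x y : Ar} (hyx : att y x)
    (hy : C y = Label.inn) : C x = Label.out := by
  cases hx : C x with
  | inn => simp [hC.1.1 x hx y hyx] at hy
  | out => rfl
  | und => exact absurd hy ((hC.2 x hx).2 y hyx)

/-- The min-max numbering decreases along the attacks that justify a label (for the `sSup` this
needs finitely many attackers), so induction on it works. -/
theorem StronglyAdmissible.labLe [Finite Ar] {L : Ar → Label} (hL : StronglyAdmissible att L)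
    (hC : CompleteLab att C) : LabLe L C := by
  obtain ⟨⟨hin, hout⟩, MM, hMMin, hMMout⟩ := hL
  suffices h : ∀ n x, MM x = n → (L x = Label.inn → C x = Label.inn) ∧
      (L x = Label.out → C x = Label.out) from
    ⟨fun x => (h _ x rfl).1, fun x => (h _ x rfl).2⟩
  intro n
  induction n using Nat.strong_induction_on with
  | _ n ih =>
  rintro x rfl
  constructor
  · intro hx
    refine hC.eq_inn_of_forall_attacker_out fun y hyx => ?_
    have hy := hin x hx y hyx
    have hlt : MM y < MM x := by
      rw [hMMin x hx]
      exact Nat.lt_succ_of_le (le_csSup (Set.toFinite _).bddAbove ⟨y, ⟨hyx, hy⟩, rfl⟩)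
    exact (ih _ hlt y rfl).2 hy
  · intro hx
    obtain ⟨y₀, hy₀x, hy₀⟩ := hout x hx
    obtain ⟨y, ⟨hyx, hy⟩, hMMy⟩ := Nat.sInf_mem
      (s := MM '' {y | att y x ∧ L y = Label.inn}) ⟨MM y₀, y₀, ⟨hy₀x, hy₀⟩, rfl⟩
    have hlt : MM y < MM x := by
      rw [hMMout x hx, hMMy]
      exact Nat.lt_succ_self _
    exact hC.eq_out_of_attacker_inn hyx ((ih _ hlt y rfl).1 hy)

end Complete

/-- An argument A is in the grounded extension iff some strongly
admissible labelling labels A in. -/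
theorem grounded_iff_stronglyAdmissible
    {Ar : Type*} [Fintype Ar] (att : Ar → Ar → Prop) (Lgr : Ar → Label)
    (hgr : CompleteLab att Lgr ∧ ∀ L, CompleteLab att L → LabLe Lgr L) (A : Ar) :
    Lgr A = Label.inn ↔ ∃ L : Ar → Label, StronglyAdmissible att L ∧ L A = Label.inn := by
  constructor
  · intro hA
    exact ⟨groundedLabelling att, groundedLabelling_stronglyAdmissible att,
      (hgr.2 _ (groundedLabelling_complete att)).1 A hA⟩
  · rintro ⟨L, hL, hA⟩
    exact (hL.labLe hgr.1).1 A hA
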